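/- arXiv:2503.24085 — 7 statements merged into one kernel-verified Lean document; each statement's English description precedes it below -/
import Mathlib

section
/- In the decoupled setting with factorized edge indicators, let q ∈ Q with q ≠ q_f and let k ∈ ℕ. Suppose that for every q' ∈ Q the value function V^π k q' admits a CPD with at most ρ(q') terms, where ρ : Q → ℕ. Then the value function V^π (k+1) q admits a CPD with at most ∑_{(ℓ,q') ∈ E_q} ρ(q') terms; i.e., the CPD rank of V^π (k+1) q is at most the sum over the outgoing DFA edges of q of the CPD ranks of the value functions at the target modes. -/
open Finset

/-- `V` admits an `R`-term canonical polyadic decomposition (CPD). -/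
def HasCPD {m : ℕ} {S : Fin m → Type*} (R : ℕ) (V : (∀ i, S i) → ℝ) : Prop :=
  ∃ v : Fin R → ∀ i, S i → ℝ, ∀ s, V s = ∑ r, ∏ i, v r i (s i)

theorem stmt3 {m : ℕ} {S A : Fin m → Type*}
    [∀ i, Fintype (S i)] [∀ i, Fintype (A i)]
    [∀ i, Nonempty (S i)] [∀ i, Nonempty (A i)]
    {Q : Type*} [Fintype Q] [Nonempty Q] [DecidableEq Q]
    (Ti : ∀ i, S i → A i → S i → ℝ)
    (hT0 : ∀ i si ai si', 0 ≤ Ti i si ai si')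
    (hT1 : ∀ i si ai, ∑ si', Ti i si ai si' = 1)
    (q_f : Q) (τ : Q → (∀ i, S i) → Q)
    (πdec : ℕ → Q → ∀ i, S i → A i)
    (V : ℕ → Q → (∀ i, S i) → ℝ)
    (hV0 : ∀ q s, V 0 q s = if q = q_f then 1 else 0)
    (hVf : ∀ k s, V (k + 1) q_f s = 1)
    (hVstep : ∀ k q, q ≠ q_f → ∀ s,
      V (k + 1) q s
        = ∑ s', (∏ i, Ti i (s i) (πdec k q i (s i)) (s' i)) * V k (τ q s') s')
    -- factorized edge indicators: each edge `e ∈ E q` consists of the factors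
    -- `e.1 i : S i → ℝ` of a `{0,1}`-valued indicator together with a target mode `e.2`
    (E : Q → Finset ((∀ i, S i → ℝ) × Q))
    (hE01 : ∀ q, ∀ e ∈ E q, ∀ i si, e.1 i si = 0 ∨ e.1 i si = 1)
    (hEind : ∀ q q' s', (if τ q s' = q' then (1 : ℝ) else 0)
        = ∑ e ∈ (E q).filter (fun e => e.2 = q'), ∏ i, e.1 i (s' i))
    (ρ : Q → ℕ) (q : Q) (hq : q ≠ q_f) (k : ℕ)
    (hCPD : ∀ q', HasCPD (ρ q') (V k q')) :
    HasCPD (∑ e ∈ E q, ρ e.2) (V (k + 1) q) := by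

  classical
  choose w hw using hCPD
  -- rewrite V k (τ q s') s' via edge indicators
  have key : ∀ s' : ∀ i, S i,
      V k (τ q s') s' = ∑ e ∈ E q, (∏ i, e.1 i (s' i)) * V k e.2 s' := by
    intro s'
    rw [← Finset.sum_fiberwise (E q) (fun e => e.2)
        (fun e => (∏ i, e.1 i (s' i)) * V k e.2 s')]
    have : ∀ q' : Q,
        (∑ e ∈ (E q).filter (fun e => e.2 = q'), (∏ i, e.1 i (s' i)) * V k e.2 s')
          = (if τ q s' = q' then (1:ℝ) else 0) * V k q' s' := by
      intro q'
      rw [hEind q q' s', Finset.sum_mul]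
      refine Finset.sum_congr rfl fun e he => ?_
      rw [(Finset.mem_filter.mp he).2]
    rw [Finset.sum_congr rfl fun q' _ => this q']
    simp
  -- the per-edge, per-rank factor functions
  set h : ((∀ i, S i → ℝ) × Q) → ℕ → ∀ i, S i → ℝ :=
    fun e r i si => ∑ si', Ti i si (πdec k q i si) si' *
      (e.1 i si' * (if hr : r < ρ e.2 then w e.2 ⟨r, hr⟩ i si' else 0)) with hh
  have expand : ∀ s, V (k + 1) q s
      = ∑ e ∈ E q, ∑ r : Fin (ρ e.2), ∏ i, h e r i (s i) := by
    intro s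
    rw [hVstep k q hq s]
    have step1 : ∀ s' : ∀ i, S i,
        (∏ i, Ti i (s i) (πdec k q i (s i)) (s' i)) * V k (τ q s') s'
          = ∑ e ∈ E q, ∑ r : Fin (ρ e.2),
              ∏ i, (Ti i (s i) (πdec k q i (s i)) (s' i) *
                (e.1 i (s' i) * (if hr : (r:ℕ) < ρ e.2 then w e.2 ⟨r, hr⟩ i (s' i) else 0))) := by
      intro s'
      rw [key s', Finset.mul_sum]
      refine Finset.sum_congr rfl fun e _ => ?_
      rw [hw e.2 s', Finset.mul_sum, Finset.mul_sum]
      refine Finset.sum_congr rfl fun r _ => ?_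
      rw [← Finset.prod_mul_distrib, ← Finset.prod_mul_distrib]
      refine Finset.prod_congr rfl fun i _ => ?_
      rw [dif_pos r.isLt]
    rw [Finset.sum_congr rfl fun s' _ => step1 s', Finset.sum_comm]
    refine Finset.sum_congr rfl fun e _ => ?_
    rw [Finset.sum_comm]
    refine Finset.sum_congr rfl fun r _ => ?_
    simp only [hh]
    exact (Fintype.prod_sum (fun i si' => Ti i (s i) (πdec k q i (s i)) si' *
      (e.1 i si' * if hr : (r : ℕ) < ρ e.2 then w e.2 ⟨(r : ℕ), hr⟩ i si' else 0))).symm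
  -- reindex the double sum as a single sum over `Fin (∑ e ∈ E q, ρ e.2)`
  have hcard : Fintype.card (Σ e : {e // e ∈ E q}, Fin (ρ e.1.2)) = ∑ e ∈ E q, ρ e.2 := by
    rw [Fintype.card_sigma]
    simpa using Finset.sum_coe_sort (E q) (fun e => ρ e.2)
  let φ : (Σ e : {e // e ∈ E q}, Fin (ρ e.1.2)) ≃ Fin (∑ e ∈ E q, ρ e.2) :=
    Fintype.equivFinOfCardEq hcard
  refine ⟨fun r => h (φ.symm r).1.1 ((φ.symm r).2 : ℕ), fun s => ?_⟩
  rw [expand s]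
  calc ∑ e ∈ E q, ∑ r : Fin (ρ e.2), ∏ i, h e (r : ℕ) i (s i)
      = ∑ e : {e // e ∈ E q}, ∑ r : Fin (ρ e.1.2), ∏ i, h e.1 (r : ℕ) i (s i) :=
        (Finset.sum_coe_sort (E q)
          (fun e => ∑ r : Fin (ρ e.2), ∏ i, h e (r : ℕ) i (s i))).symm
    _ = ∑ x : Σ e : {e // e ∈ E q}, Fin (ρ e.1.2), ∏ i, h x.1.1 (x.2 : ℕ) i (s i) := by
        rw [← Finset.univ_sigma_univ, Finset.sum_sigma]
    _ = ∑ r, ∏ i, h (φ.symm r).1.1 ((φ.symm r).2 : ℕ) i (s i) :=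
        (Equiv.sum_comp φ.symm
          (fun x : Σ e : {e // e ∈ E q}, Fin (ρ e.1.2) =>
            ∏ i, h x.1.1 (x.2 : ℕ) i (s i))).symm
end

section
/- In the decoupled setting, let ℓ : S → ℝ be an indicator that factorizes as ℓ s' = ∏_{i=1}^m ℓ_i s'_i with ℓ_i : S_i → {0,1}, and let p : S → A be a decoupled policy map p s = (p_1 s_1, …, p_m s_m) with p_i : S_i → A_i. If V : S → ℝ admits an R-term CPD, then the function s ↦ ∑_{s' ∈ S} ℓ s' · (∏_{i=1}^m T_i s_i (p_i s_i) s'_i) · V s' also admits an R-term CPD; i.e., applying a DFA-informed operator with factorized indicator and decoupled policy does not increase the CPD rank. -/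
open Finset

theorem stmt5 {m : ℕ} {S A : Fin m → Type*}
    [∀ i, Fintype (S i)] [∀ i, Fintype (A i)]
    [∀ i, Nonempty (S i)] [∀ i, Nonempty (A i)]
    (Ti : ∀ i, S i → A i → S i → ℝ)
    (hT0 : ∀ i si ai si', 0 ≤ Ti i si ai si')
    (hT1 : ∀ i si ai, ∑ si', Ti i si ai si' = 1)
    -- factorized {0,1}-valued indicator
    (ℓ : ∀ i, S i → ℝ) (hℓ : ∀ i si, ℓ i si = 0 ∨ ℓ i si = 1)
    -- decoupled policy
    (p : ∀ i, S i → A i)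
    (R : ℕ) (V : (∀ i, S i) → ℝ) (hV : HasCPD R V) :
    HasCPD R (fun s => ∑ s' : ∀ i, S i,
      (∏ i, ℓ i (s' i)) * (∏ i, Ti i (s i) (p i (s i)) (s' i)) * V s') := by
  obtain ⟨v, hv⟩ := hV
  refine ⟨fun r i si => ∑ si', ℓ i si' * Ti i si (p i si) si' * v r i si', fun s => ?_⟩
  have : ∀ r : Fin R, (∏ i, ∑ si', ℓ i si' * Ti i (s i) (p i (s i)) si' * v r i si')
      = ∑ s' : ∀ i, S i, ∏ i, ℓ i (s' i) * Ti i (s i) (p i (s i)) (s' i) * v r i (s' i) := by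
    intro r
    rw [Finset.prod_univ_sum]
    rfl
  simp_rw [this, hv]
  rw [Finset.sum_comm]
  congr 1
  ext s'
  rw [Finset.mul_sum]
  congr 1
  ext r
  rw [Finset.prod_mul_distrib, Finset.prod_mul_distrib]
end

section
/- For every time-varying Markov policy π, every k ∈ ℕ, every q ∈ Q with q ≠ q_f, and every s ∈ S, the value function equals the sum of the values of all accepting DFA paths of length at most k (i.e., of all tree vertices labeled q in the expanded tree): V^π k q s = ∑_{j=1}^{k} ∑_{(q_0,…,q_j) accepting path from q of length j} ( T_{q_0→q_1}^{π (k-1) q_0} ( T_{q_1→q_2}^{π (k-2) q_1} ( ⋯ ( T_{q_{j-1}→q_j}^{π (k-j) q_{j-1}} 𝟙 ) ⋯ ) ) ) s, where the inner sum ranges over all sequences (q_0, q_1, …, q_j) in Q with q_0 = q, q_j = q_f, and q_i ≠ q_f for 0 ≤ i < j, and 𝟙 : S → ℝ is the constant-one function. -/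
open Finset

/-- DFA-informed operator: `(T_{q→q'}^p W) s = ∑_{s'} [τ q s' = q'] · T s (p s) s' · W s'`. -/
def dfaOp {S A Q : Type*} [Fintype S] [DecidableEq Q]
    (T : S → A → S → ℝ) (τ : Q → S → Q) (p : S → A) (q q' : Q)
    (W : S → ℝ) (s : S) : ℝ :=
  ∑ s', (if τ q s' = q' then (1 : ℝ) else 0) * T s (p s) s' * W s'

/-- Value of a DFA path `c = (q_0, …, q_j)`: the composition of the DFA-informed
operators along the path, applied to the constant-one function, where the operator
for the edge `q_0 → q_1` uses the policy at time `t`, the next one at time `t - 1`,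
and so on.  `pathVal T τ π j c (k-1)` is the vertex value
`T_{q_0→q_1}^{π (k-1) q_0} (⋯ (T_{q_{j-1}→q_j}^{π (k-j) q_{j-1}} 𝟙) ⋯)`. -/
def pathVal {S A Q : Type*} [Fintype S] [DecidableEq Q]
    (T : S → A → S → ℝ) (τ : Q → S → Q) (π : ℕ → Q → S → A) :
    (j : ℕ) → (Fin (j + 1) → Q) → ℕ → (S → ℝ)
  | 0, _, _ => fun _ => 1
  | j + 1, c, t =>
      dfaOp T τ (π t (c 0)) (c 0) (c 1)
        (pathVal T τ π j (fun i => c i.succ) (t - 1))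

section Aux

variable {S A Q : Type*} [Fintype S] [Fintype A] [Fintype Q] [DecidableEq Q]
variable (T : S → A → S → ℝ) (q_f : Q) (τ : Q → S → Q) (π : ℕ → Q → S → A)

/-- Paths of length `j` from `q` to `q_f` with no interior visit to `q_f`. -/
def pathsFrom (j : ℕ) (q : Q) : Finset (Fin (j + 1) → Q) :=
  Finset.univ.filter (fun c : Fin (j + 1) → Q =>
    c 0 = q ∧ c (Fin.last j) = q_f ∧
      ∀ i : Fin (j + 1), (i : ℕ) < j → c i ≠ q_f)

/-- Paths of length `j` to `q_f` with no interior visit to `q_f` (any start). -/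
def pathsAll (j : ℕ) : Finset (Fin (j + 1) → Q) :=
  Finset.univ.filter (fun c : Fin (j + 1) → Q =>
    c (Fin.last j) = q_f ∧ ∀ i : Fin (j + 1), (i : ℕ) < j → c i ≠ q_f)

lemma pathsFrom_eq_filter (j : ℕ) (q : Q) :
    pathsFrom q_f j q = (pathsAll q_f j).filter (fun c => c 0 = q) := by
  ext c
  simp only [pathsFrom, pathsAll, Finset.mem_filter, Finset.mem_univ, true_and]
  tauto

lemma pathsFrom_zero (q : Q) :
    pathsFrom q_f 0 q
      = if q = q_f then {fun _ => q_f} else (∅ : Finset (Fin 1 → Q)) := by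
  ext c
  simp only [pathsFrom, Finset.mem_filter, Finset.mem_univ, true_and]
  constructor
  · rintro ⟨h1, h2, -⟩
    have h2' : c 0 = q_f := h2
    have hqf : q = q_f := h1.symm.trans h2'
    rw [if_pos hqf, Finset.mem_singleton]
    funext i
    rw [show i = 0 from Fin.ext (by omega), h2']
  · intro hmem
    by_cases hq : q = q_f
    · rw [if_pos hq, Finset.mem_singleton] at hmem
      subst hmem
      exact ⟨hq.symm, rfl, fun i hi => absurd hi (by omega)⟩
    · rw [if_neg hq] at hmem
      exact absurd hmem (Finset.notMem_empty c)

lemma pathsFrom_succ_qf (j : ℕ) :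
    pathsFrom q_f (j + 1) q_f = ∅ := by
  ext c
  simp only [pathsFrom, Finset.mem_filter, Finset.mem_univ, true_and,
    Finset.notMem_empty, iff_false]
  rintro ⟨h1, -, h3⟩
  exact h3 0 (by simp) h1

lemma sum_pathsFrom_succ (j : ℕ) {q : Q} (hq : q ≠ q_f)
    (f : (Fin (j + 2) → Q) → ℝ) :
    ∑ c ∈ pathsFrom q_f (j + 1) q, f c
      = ∑ c' ∈ pathsAll q_f j, f (Fin.cons q c') := by
  refine Finset.sum_nbij' (fun c => Fin.tail c) (fun c' => Fin.cons q c')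
    ?_ ?_ ?_ ?_ ?_
  · intro c hc
    simp only [pathsFrom, Finset.mem_filter, Finset.mem_univ, true_and] at hc
    obtain ⟨h1, h2, h3⟩ := hc
    simp only [pathsAll, Finset.mem_filter, Finset.mem_univ, true_and]
    refine ⟨?_, ?_⟩
    · show c (Fin.last j).succ = q_f
      rw [Fin.succ_last]; exact h2
    · intro i hi
      exact h3 i.succ (by simpa using hi)
  · intro c' hc'
    simp only [pathsAll, Finset.mem_filter, Finset.mem_univ, true_and] at hc'
    obtain ⟨h2, h3⟩ := hc'
    simp only [pathsFrom, Finset.mem_filter, Finset.mem_univ, true_and]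
    refine ⟨Fin.cons_zero _ _, ?_, ?_⟩
    · rw [← Fin.succ_last, Fin.cons_succ]; exact h2
    · intro i hi
      rcases Fin.eq_zero_or_eq_succ i with h0 | ⟨i', rfl⟩
      · rw [h0, Fin.cons_zero]; exact hq
      · rw [Fin.cons_succ]
        exact h3 i' (by simpa using hi)
  · intro c hc
    simp only [pathsFrom, Finset.mem_filter, Finset.mem_univ, true_and] at hc
    rw [← hc.1]; exact Fin.cons_self_tail c
  · intro c' _
    funext i
    simp [Fin.tail]
  · intro c hc
    simp only [pathsFrom, Finset.mem_filter, Finset.mem_univ, true_and] at hc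
    rw [← hc.1, Fin.cons_self_tail c]

lemma pathVal_cons (j t : ℕ) (q : Q) (c' : Fin (j + 1) → Q) :
    pathVal T τ π (j + 1) (Fin.cons q c') t
      = dfaOp T τ (π t q) q (c' 0) (pathVal T τ π j c' (t - 1)) := by
  have h1 : (Fin.cons q c' : Fin (j + 2) → Q) 1 = c' 0 := by
    rw [← Fin.succ_zero_eq_one, Fin.cons_succ]
  have h2 : (fun i : Fin (j + 1) => (Fin.cons q c' : Fin (j + 2) → Q) i.succ) = c' := by
    funext i; rw [Fin.cons_succ]
  rw [pathVal, Fin.cons_zero, h1, h2]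

/-- The path-sum right-hand side. -/
def RHS (k : ℕ) (q : Q) (s : S) : ℝ :=
  ∑ j ∈ Finset.Icc 1 k, ∑ c ∈ pathsFrom q_f j q,
    pathVal T τ π j c (k - 1) s

lemma RHS_succ (k : ℕ) {q : Q} (hq : q ≠ q_f) (s : S) :
    RHS T q_f τ π (k + 1) q s
      = ∑ s', T s (π k q s) s'
          * (if τ q s' = q_f then 1 else RHS T q_f τ π k (τ q s') s') := by
  have hIcc : ∀ (n : ℕ) (F : ℕ → ℝ),
      ∑ j ∈ Finset.Icc 1 n, F j = ∑ i ∈ Finset.range n, F (1 + i) := by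
    intro n F
    rw [← Finset.Ico_add_one_right_eq_Icc, Finset.sum_Ico_eq_sum_range]
    simp
  -- W i q' s' : sum over paths of length i from q'
  set W : ℕ → Q → S → ℝ := fun i q' s' =>
    ∑ c ∈ pathsFrom q_f i q', pathVal T τ π i c (k - 1) s' with hW
  have step1 : RHS T q_f τ π (k + 1) q s
      = ∑ i ∈ Finset.range (k + 1), ∑ c' ∈ pathsAll q_f i,
          dfaOp T τ (π k q) q (c' 0) (pathVal T τ π i c' (k - 1)) s := by
    rw [RHS, hIcc]
    refine Finset.sum_congr rfl fun i _ => ?_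
    have h1i : 1 + i = i + 1 := Nat.add_comm 1 i
    rw [h1i]
    rw [sum_pathsFrom_succ q_f i hq]
    refine Finset.sum_congr rfl fun c' _ => ?_
    rw [pathVal_cons]
    simp only [Nat.add_sub_cancel]
  have step2 : ∀ i, ∑ c' ∈ pathsAll q_f i,
        dfaOp T τ (π k q) q (c' 0) (pathVal T τ π i c' (k - 1)) s
      = ∑ s', T s (π k q s) s' * W i (τ q s') s' := by
    intro i
    simp only [dfaOp]
    rw [Finset.sum_comm]
    refine Finset.sum_congr rfl fun s' _ => ?_
    rw [hW]
    simp only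
    rw [pathsFrom_eq_filter, Finset.sum_filter, Finset.mul_sum]
    refine Finset.sum_congr rfl fun c' _ => ?_
    by_cases h : c' 0 = τ q s'
    · rw [if_pos h, if_pos h.symm, one_mul]
    · rw [if_neg h, if_neg (fun hh => h hh.symm), zero_mul, zero_mul, mul_zero]
  have step3 : ∀ q' s', ∑ i ∈ Finset.range (k + 1), W i q' s'
      = if q' = q_f then 1 else RHS T q_f τ π k q' s' := by
    intro q' s'
    rw [Finset.sum_range_succ']
    have hW0 : W 0 q' s' = if q' = q_f then 1 else 0 := by
      rw [hW]
      simp only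
      rw [pathsFrom_zero]
      by_cases h : q' = q_f
      · rw [if_pos h, if_pos h]
        simp [pathVal]
      · rw [if_neg h, if_neg h, Finset.sum_empty]
    by_cases h : q' = q_f
    · rw [if_pos h]
      have : ∀ i ∈ Finset.range k, W (i + 1) q' s' = 0 := by
        intro i _
        rw [hW]
        simp only
        rw [h, pathsFrom_succ_qf, Finset.sum_empty]
      rw [Finset.sum_congr rfl this, Finset.sum_const_zero, zero_add, hW0, if_pos h]
    · rw [if_neg h, hW0, if_neg h, add_zero, RHS, hIcc]
      refine Finset.sum_congr rfl fun i _ => ?_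
      rw [Nat.add_comm 1 i]
  calc RHS T q_f τ π (k + 1) q s
      = ∑ i ∈ Finset.range (k + 1), ∑ s', T s (π k q s) s' * W i (τ q s') s' := by
        rw [step1]; exact Finset.sum_congr rfl fun i _ => step2 i
    _ = ∑ s', ∑ i ∈ Finset.range (k + 1), T s (π k q s) s' * W i (τ q s') s' :=
        Finset.sum_comm
    _ = ∑ s', T s (π k q s) s'
          * (if τ q s' = q_f then 1 else RHS T q_f τ π k (τ q s') s') := by
        refine Finset.sum_congr rfl fun s' _ => ?_
        rw [← Finset.mul_sum, step3]

end Aux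

theorem stmt6 {S A Q : Type*} [Fintype S] [Fintype A] [Fintype Q]
    [Nonempty S] [Nonempty A] [Nonempty Q] [DecidableEq Q]
    (T : S → A → S → ℝ)
    (hT0 : ∀ s a s', 0 ≤ T s a s') (hT1 : ∀ s a, ∑ s', T s a s' = 1)
    (q_f : Q) (τ : Q → S → Q) (π : ℕ → Q → S → A)
    (V : ℕ → Q → S → ℝ)
    (hV0 : ∀ q s, V 0 q s = if q = q_f then 1 else 0)
    (hVf : ∀ k s, V (k + 1) q_f s = 1)
    (hVstep : ∀ k q, q ≠ q_f → ∀ s,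
      V (k + 1) q s = ∑ s', T s (π k q s) s' * V k (τ q s') s') :
    ∀ (k : ℕ) (q : Q), q ≠ q_f → ∀ s : S,
      V k q s
        = ∑ j ∈ Finset.Icc 1 k,
            ∑ c ∈ Finset.univ.filter (fun c : Fin (j + 1) → Q =>
                c 0 = q ∧ c (Fin.last j) = q_f ∧
                  ∀ i : Fin (j + 1), (i : ℕ) < j → c i ≠ q_f),
              pathVal T τ π j c (k - 1) s := by
  have key : ∀ (k : ℕ) (q : Q), q ≠ q_f → ∀ s : S,
      V k q s = RHS T q_f τ π k q s := by
    intro k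
    induction k with
    | zero =>
      intro q hq s
      rw [hV0, if_neg hq, RHS]
      simp
    | succ k ih =>
      intro q hq s
      rw [hVstep k q hq s, RHS_succ T q_f τ π k hq s]
      refine Finset.sum_congr rfl fun s' _ => ?_
      congr 1
      by_cases h : τ q s' = q_f
      · rw [if_pos h, h]
        cases k with
        | zero => rw [hV0, if_pos rfl]
        | succ k => exact hVf k s'
      · rw [if_neg h, ih (τ q s') h s']
  intro k q hq s
  rw [key k q hq s, RHS]
  rfl
end

section
/- Let π be a time-varying Markov policy, k ∈ ℕ, and q ∈ Q with q ≠ q_f. Let P_k(q) denote the set of all pairs (j, (q_0,…,q_j)) with 1 ≤ j ≤ k, q_0 = q, q_j = q_f, and q_i ≠ q_f for 0 ≤ i < j, and for each such path let v_p : S → ℝ be its value v_p = T_{q_0→q_1}^{π (k-1) q_0} ( ⋯ ( T_{q_{j-1}→q_j}^{π (k-j) q_{j-1}} 𝟙 ) ⋯ ). Then for every subset P' ⊆ P_k(q) (corresponding to the vertices retained by a pruned subtree) and every s ∈ S, the pruned-tree value is a lower bound on the true value function: ∑_{p ∈ P'} v_p s ≤ V^π k q s. -/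
open Finset

/-!
Condition on the first transition `s → s'` of the MDP. If the DFA enters `q_f` at once, the only
retained path that contributes is `![q, q_f]`, of value one, and `V k q_f = 1`. Otherwise the
retained paths through `τ q s'`, with their first state dropped, form a retained family of
accepting paths from `τ q s'` at horizon `k`, so by induction on `k` they are bounded by
`V k (τ q s')`. As `T ≥ 0`, these bounds pass through the weighted sum over `s'`.
-/

theorem Finset.sum_Icc_one_eq_sum_range {M : Type*} [AddCommMonoid M] (f : ℕ → M) (n : ℕ) :
    ∑ j ∈ Icc 1 n, f j = ∑ j ∈ range n, f (j + 1) := by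
  rw [range_eq_Ico, sum_Ico_add' f 0 n 1, zero_add, Ico_add_one_right_eq_Icc]

theorem Fin.tail_injOn_head_eq {n : ℕ} {α : Type*} (a : α) :
    Set.InjOn (Fin.tail : (Fin (n + 1) → α) → _) {c | c 0 = a} := by
  intro x hx y hy h
  rw [← Fin.cons_self_tail x, ← Fin.cons_self_tail y, h, hx, hy]

section

variable {S A Q : Type*}

def IsAcceptingPath (q_f q : Q) (j : ℕ) (c : Fin (j + 1) → Q) : Prop :=
  c 0 = q ∧ c (Fin.last j) = q_f ∧ ∀ i : Fin (j + 1), (i : ℕ) < j → c i ≠ q_f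

namespace IsAcceptingPath

variable {q_f q : Q} {j : ℕ}

theorem tail {c : Fin (j + 2) → Q} (h : IsAcceptingPath q_f q (j + 1) c) :
    IsAcceptingPath q_f (c 1) j (Fin.tail c) := by
  obtain ⟨-, hlast, hlonger⟩ := h
  refine ⟨rfl, hlast, fun i hi => hlonger i.succ ?_⟩
  simpa using hi

theorem second_ne {c : Fin (j + 3) → Q} (h : IsAcceptingPath q_f q (j + 2) c) : c 1 ≠ q_f :=
  h.2.2 1 (by simp)

theorem eq_of_length_one {c : Fin 2 → Q} (h : IsAcceptingPath q_f q 1 c) : c = ![q, q_f] := by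
  ext i
  fin_cases i
  exacts [h.1, h.2.1]

end IsAcceptingPath

variable [Fintype S] [DecidableEq Q]
  {T : S → A → S → ℝ} {τ : Q → S → Q} {π : ℕ → Q → S → A}

theorem pathVal_succ_apply (j : ℕ) (c : Fin (j + 2) → Q) (t : ℕ) (s : S) :
    pathVal T τ π (j + 1) c t s = ∑ s', T s (π t (c 0) s) s' *
      if c 1 = τ (c 0) s' then pathVal T τ π j (Fin.tail c) (t - 1) s' else 0 := by
  refine sum_congr rfl fun s' _ => ?_
  by_cases h : c 1 = τ (c 0) s'
  · rw [if_pos h.symm, if_pos h, one_mul]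
    rfl
  · rw [if_neg (Ne.symm h), if_neg h, zero_mul, zero_mul, mul_zero]

theorem sum_sum_pathVal_eq_sum_first_step {P : (j : ℕ) → Finset (Fin (j + 1) → Q)} {q : Q}
    {n : ℕ} (hP : ∀ j ∈ range n, ∀ c ∈ P (j + 1), c 0 = q) (t : ℕ) (s : S) :
    ∑ j ∈ Icc 1 n, ∑ c ∈ P j, pathVal T τ π j c t s =
      ∑ s', T s (π t q s) s' * ∑ j ∈ range n,
        ∑ c ∈ (P (j + 1)).filter (· 1 = τ q s'),
          pathVal T τ π j (Fin.tail c) (t - 1) s' := by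
  calc ∑ j ∈ Icc 1 n, ∑ c ∈ P j, pathVal T τ π j c t s
      = ∑ j ∈ range n, ∑ c ∈ P (j + 1), ∑ s', T s (π t q s) s' *
          if c 1 = τ q s' then pathVal T τ π j (Fin.tail c) (t - 1) s' else 0 := by
        rw [sum_Icc_one_eq_sum_range]
        refine sum_congr rfl fun j hj => sum_congr rfl fun c hc => ?_
        rw [pathVal_succ_apply, hP j hj c hc]
    _ = _ := by
        simp_rw [sum_comm (s := P _), mul_sum, sum_filter, mul_ite, mul_zero]
        exact sum_comm

def tailFamily (P : (j : ℕ) → Finset (Fin (j + 1) → Q)) (q' : Q) (j : ℕ) :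
    Finset (Fin (j + 1) → Q) :=
  ((P (j + 1)).filter (· 1 = q')).image Fin.tail

section AcceptingFamily

variable {q_f q : Q} {k : ℕ} {P : (j : ℕ) → Finset (Fin (j + 1) → Q)}
  (hP : ∀ j ∈ Icc 1 (k + 1), ∀ c ∈ P j, IsAcceptingPath q_f q j c)
include hP

theorem isAcceptingPath_of_mem_tailFamily (q' : Q) :
    ∀ j ∈ Icc 1 k, ∀ d ∈ tailFamily P q' j, IsAcceptingPath q_f q' j d := by
  intro j hj d hd
  obtain ⟨c, hc, rfl⟩ := mem_image.mp hd
  rw [mem_filter] at hc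
  rw [← hc.2]
  exact (hP (j + 1) (by simp_all) c hc.1).tail

theorem sum_sum_filter_eq_sum_sum_tailFamily {q' : Q} (hq' : q' ≠ q_f)
    (f : (j : ℕ) → (Fin (j + 1) → Q) → ℝ) :
    ∑ j ∈ range (k + 1), ∑ c ∈ (P (j + 1)).filter (· 1 = q'), f j (Fin.tail c) =
      ∑ j ∈ Icc 1 k, ∑ d ∈ tailFamily P q' j, f j d := by
  have hlength_one : ∑ c ∈ (P (0 + 1)).filter (· 1 = q'), f 0 (Fin.tail c) = 0 := by
    refine sum_eq_zero fun c hc => absurd ?_ hq'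
    rw [mem_filter] at hc
    rw [← hc.2]
    exact (hP 1 (by simp) c hc.1).2.1
  rw [sum_range_succ', hlength_one, add_zero, sum_Icc_one_eq_sum_range]
  refine sum_congr rfl fun j hj => (sum_image ?_).symm
  intro x hx y hy
  simp only [coe_filter] at hx hy
  exact Fin.tail_injOn_head_eq q (hP _ (by simp_all) x hx.1).1 (hP _ (by simp_all) y hy.1).1

theorem sum_sum_filter_pathVal_tail_le_one (t : ℕ) (s : S) :
    ∑ j ∈ range (k + 1), ∑ c ∈ (P (j + 1)).filter (· 1 = q_f),
      pathVal T τ π j (Fin.tail c) t s ≤ 1 := by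
  have hlonger : ∀ j ∈ range k, (P (j + 2)).filter (· 1 = q_f) = ∅ := fun j hj =>
    filter_eq_empty_iff.mpr fun c hc => (hP (j + 2) (by simp_all) c hc).second_ne
  rw [sum_range_succ', sum_congr rfl fun j hj => by rw [hlonger j hj, sum_empty],
    sum_const_zero, zero_add]
  simp only [pathVal, sum_const, nsmul_eq_mul, mul_one, Nat.cast_le_one]
  refine card_le_one.mpr fun x hx y hy => ?_
  rw [(hP 1 (by simp) x (mem_filter.mp hx).1).eq_of_length_one,
    (hP 1 (by simp) y (mem_filter.mp hy).1).eq_of_length_one]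

end AcceptingFamily

theorem sum_sum_pathVal_le_of_isAcceptingPath (hT0 : ∀ s a s', 0 ≤ T s a s') {q_f : Q}
    {V : ℕ → Q → S → ℝ} (hV0 : ∀ q s, 0 ≤ V 0 q s) (hVf : ∀ k s, V k q_f s = 1)
    (hVstep : ∀ k q, q ≠ q_f → ∀ s,
      V (k + 1) q s = ∑ s', T s (π k q s) s' * V k (τ q s') s')
    (k : ℕ) : ∀ q, q ≠ q_f → ∀ P : (j : ℕ) → Finset (Fin (j + 1) → Q),
      (∀ j ∈ Icc 1 k, ∀ c ∈ P j, IsAcceptingPath q_f q j c) → ∀ s,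
      ∑ j ∈ Icc 1 k, ∑ c ∈ P j, pathVal T τ π j c (k - 1) s ≤ V k q s := by
  induction k with
  | zero => intro q _ P _ s; simpa using hV0 q s
  | succ k ih =>
    intro q hq P hP s
    have hhead : ∀ j ∈ range (k + 1), ∀ c ∈ P (j + 1), c 0 = q := fun j hj c hc =>
      (hP (j + 1) (by simp_all) c hc).1
    rw [Nat.add_sub_cancel, sum_sum_pathVal_eq_sum_first_step hhead, hVstep k q hq]
    refine sum_le_sum fun s' _ => mul_le_mul_of_nonneg_left ?_ (hT0 _ _ _)
    by_cases hacc : τ q s' = q_f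
    · rw [hacc, hVf]
      exact sum_sum_filter_pathVal_tail_le_one hP _ _
    · rw [sum_sum_filter_eq_sum_sum_tailFamily hP hacc
        fun j d => pathVal T τ π j d (k - 1) s']
      exact ih _ hacc _ (isAcceptingPath_of_mem_tailFamily hP _) s'

end

theorem stmt8_general {S A Q : Type*} [Fintype S] [Fintype Q] [DecidableEq Q]
    (T : S → A → S → ℝ)
    (hT0 : ∀ s a s', 0 ≤ T s a s')
    (q_f : Q) (τ : Q → S → Q) (π : ℕ → Q → S → A)
    (V : ℕ → Q → S → ℝ)
    (hV0 : ∀ q s, V 0 q s = if q = q_f then 1 else 0)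
    (hVf : ∀ k s, V (k + 1) q_f s = 1)
    (hVstep : ∀ k q, q ≠ q_f → ∀ s,
      V (k + 1) q s = ∑ s', T s (π k q s) s' * V k (τ q s') s')
    (k : ℕ) (q : Q) (hq : q ≠ q_f)
    -- `P' j` is the set of retained accepting paths of length `j` from `q`
    (P' : (j : ℕ) → Finset (Fin (j + 1) → Q))
    (hP' : ∀ j ∈ Finset.Icc 1 k,
      P' j ⊆ Finset.univ.filter (fun c : Fin (j + 1) → Q =>
        c 0 = q ∧ c (Fin.last j) = q_f ∧
          ∀ i : Fin (j + 1), (i : ℕ) < j → c i ≠ q_f)) :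
    ∀ s : S,
      ∑ j ∈ Finset.Icc 1 k, ∑ c ∈ P' j, pathVal T τ π j c (k - 1) s ≤ V k q s := by
  have hV0_nonneg : ∀ q s, 0 ≤ V 0 q s := fun q s => by
    rw [hV0]
    split_ifs <;> norm_num
  have hV_accepting : ∀ k s, V k q_f s = 1 := by
    rintro (_ | k) s
    · simp [hV0]
    · exact hVf k s
  exact sum_sum_pathVal_le_of_isAcceptingPath hT0 hV0_nonneg hV_accepting hVstep k q hq P'
    fun j hj c hc => (mem_filter.mp (hP' j hj hc)).2

theorem stmt8 {S A Q : Type*} [Fintype S] [Fintype A] [Fintype Q]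
    [Nonempty S] [Nonempty A] [Nonempty Q] [DecidableEq Q]
    (T : S → A → S → ℝ)
    (hT0 : ∀ s a s', 0 ≤ T s a s') (hT1 : ∀ s a, ∑ s', T s a s' = 1)
    (q_f : Q) (τ : Q → S → Q) (π : ℕ → Q → S → A)
    (V : ℕ → Q → S → ℝ)
    (hV0 : ∀ q s, V 0 q s = if q = q_f then 1 else 0)
    (hVf : ∀ k s, V (k + 1) q_f s = 1)
    (hVstep : ∀ k q, q ≠ q_f → ∀ s,
      V (k + 1) q s = ∑ s', T s (π k q s) s' * V k (τ q s') s')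
    (k : ℕ) (q : Q) (hq : q ≠ q_f)
    -- `P' j` is the set of retained accepting paths of length `j` from `q`
    (P' : (j : ℕ) → Finset (Fin (j + 1) → Q))
    (hP' : ∀ j ∈ Finset.Icc 1 k,
      P' j ⊆ Finset.univ.filter (fun c : Fin (j + 1) → Q =>
        c 0 = q ∧ c (Fin.last j) = q_f ∧
          ∀ i : Fin (j + 1), (i : ℕ) < j → c i ≠ q_f)) :
    ∀ s : S,
      ∑ j ∈ Finset.Icc 1 k, ∑ c ∈ P' j, pathVal T τ π j c (k - 1) s ≤ V k q s :=
  stmt8_general T hT0 q_f τ π V hV0 hVf hVstep k q hq P' hP'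
end

section
/- The optimal value iteration converges: for every q ∈ Q and s ∈ S, the real sequence k ↦ V* k q s converges as k → ∞; i.e., there exists V∞ : Q → S → ℝ such that for all q, s the sequence V* k q s tends to V∞ q s. -/
open Finset Filter Topology

theorem stmt11 {S A Q : Type*} [Fintype S] [Fintype A] [Fintype Q]
    [Nonempty S] [Nonempty A] [Nonempty Q] [DecidableEq Q]
    (T : S → A → S → ℝ)
    (hT0 : ∀ s a s', 0 ≤ T s a s') (hT1 : ∀ s a, ∑ s', T s a s' = 1)
    (q_f : Q) (τ : Q → S → Q)
    (Vopt : ℕ → Q → S → ℝ)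
    (hVopt0 : ∀ q s, Vopt 0 q s = if q = q_f then 1 else 0)
    (hVoptf : ∀ k s, Vopt (k + 1) q_f s = 1)
    (hVoptstep : ∀ k q, q ≠ q_f → ∀ s,
      Vopt (k + 1) q s
        = Finset.univ.sup' Finset.univ_nonempty
            (fun a : A => ∑ s', T s a s' * Vopt k (τ q s') s')) :
    ∃ Vinf : Q → S → ℝ, ∀ (q : Q) (s : S),
      Tendsto (fun k => Vopt k q s) atTop (𝓝 (Vinf q s)) := by
  have h0 : ∀ k q s, 0 ≤ Vopt k q s := by
    intro k
    induction k with
    | zero => intro q s; rw [hVopt0]; split <;> norm_num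
    | succ k ih =>
      intro q s
      by_cases hq : q = q_f
      · subst hq; rw [hVoptf]; norm_num
      · rw [hVoptstep k q hq s]
        obtain ⟨a⟩ := ‹Nonempty A›
        refine le_trans ?_ (Finset.le_sup' _ (Finset.mem_univ a))
        exact Finset.sum_nonneg fun s' _ => mul_nonneg (hT0 _ _ _) (ih _ _)
  have h1 : ∀ k q s, Vopt k q s ≤ 1 := by
    intro k
    induction k with
    | zero => intro q s; rw [hVopt0]; split <;> norm_num
    | succ k ih =>
      intro q s
      by_cases hq : q = q_f
      · subst hq; rw [hVoptf]
      · rw [hVoptstep k q hq s]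
        refine Finset.sup'_le _ _ fun a _ => ?_
        calc ∑ s', T s a s' * Vopt k (τ q s') s'
            ≤ ∑ s', T s a s' * 1 :=
              Finset.sum_le_sum fun s' _ =>
                mul_le_mul_of_nonneg_left (ih _ _) (hT0 _ _ _)
          _ = 1 := by simp [hT1 s a]
  have hmono : ∀ k q s, Vopt k q s ≤ Vopt (k + 1) q s := by
    intro k
    induction k with
    | zero =>
      intro q s
      rw [hVopt0]
      by_cases hq : q = q_f
      · subst hq; rw [hVoptf]; simp
      · simp only [if_neg hq]; exact h0 1 q s
    | succ k ih =>
      intro q s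
      by_cases hq : q = q_f
      · subst hq; rw [hVoptf, hVoptf]
      · rw [hVoptstep k q hq s, hVoptstep (k+1) q hq s]
        refine Finset.sup'_le _ _ fun a ha => ?_
        refine le_trans ?_ (Finset.le_sup' _ ha)
        exact Finset.sum_le_sum fun s' _ =>
          mul_le_mul_of_nonneg_left (ih _ _) (hT0 _ _ _)
  refine ⟨fun q s => ⨆ k, Vopt k q s, fun q s => ?_⟩
  exact tendsto_atTop_ciSup (monotone_nat_of_le_succ fun k => hmono k q s)
    ⟨1, fun x ⟨k, hk⟩ => hk ▸ h1 k q s⟩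
end

section
/- The pointwise limit V∞ q s = lim_{k→∞} V* k q s of the optimal value iteration is a fixed point of the Bellman operator: for every q ∈ Q and s ∈ S, V∞ q s = 1 if q = q_f, and V∞ q s = max over a ∈ A of ∑_{s' ∈ S} T s a s' · V∞ (τ q s') s' if q ≠ q_f. -/
open Finset Filter Topology

theorem stmt12 {S A Q : Type*} [Fintype S] [Fintype A] [Fintype Q]
    [Nonempty S] [Nonempty A] [Nonempty Q] [DecidableEq Q]
    (T : S → A → S → ℝ)
    (hT0 : ∀ s a s', 0 ≤ T s a s') (hT1 : ∀ s a, ∑ s', T s a s' = 1)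
    (q_f : Q) (τ : Q → S → Q)
    (Vopt : ℕ → Q → S → ℝ)
    (hVopt0 : ∀ q s, Vopt 0 q s = if q = q_f then 1 else 0)
    (hVoptf : ∀ k s, Vopt (k + 1) q_f s = 1)
    (hVoptstep : ∀ k q, q ≠ q_f → ∀ s,
      Vopt (k + 1) q s
        = Finset.univ.sup' Finset.univ_nonempty
            (fun a : A => ∑ s', T s a s' * Vopt k (τ q s') s'))
    (Vinf : Q → S → ℝ)
    (hVinf : ∀ (q : Q) (s : S),
      Tendsto (fun k => Vopt k q s) atTop (𝓝 (Vinf q s))) :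
    (∀ s : S, Vinf q_f s = 1)
    ∧ (∀ (q : Q), q ≠ q_f → ∀ s : S,
        Vinf q s
          = Finset.univ.sup' Finset.univ_nonempty
              (fun a : A => ∑ s', T s a s' * Vinf (τ q s') s')) := by
  constructor
  · intro s
    have h1 : Tendsto (fun k => Vopt k q_f s) atTop (𝓝 (1 : ℝ)) := by
      apply Tendsto.congr' _ tendsto_const_nhds
      filter_upwards [eventually_ge_atTop 1] with k hk
      obtain ⟨m, rfl⟩ := Nat.exists_eq_add_of_le hk
      simpa [Nat.add_comm] using (hVoptf m s).symm
    exact tendsto_nhds_unique (hVinf q_f s) h1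
  · intro q hq s
    have h2 : Tendsto (fun k => Vopt (k + 1) q s) atTop
        (𝓝 (Finset.univ.sup' Finset.univ_nonempty
          (fun a : A => ∑ s', T s a s' * Vinf (τ q s') s'))) := by
      have : Tendsto (fun k => Finset.univ.sup' Finset.univ_nonempty
          (fun a : A => ∑ s', T s a s' * Vopt k (τ q s') s')) atTop
          (𝓝 (Finset.univ.sup' Finset.univ_nonempty
            (fun a : A => ∑ s', T s a s' * Vinf (τ q s') s'))) := by
        apply Filter.Tendsto.finset_sup'_nhds_apply
        intro a _
        exact tendsto_finset_sum _ fun s' _ =>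
          (hVinf (τ q s') s').const_mul (T s a s')
      refine Filter.Tendsto.congr ?_ this
      intro k
      exact (hVoptstep k q hq s).symm
    have h3 : Tendsto (fun k => Vopt (k + 1) q s) atTop (𝓝 (Vinf q s)) :=
      (hVinf q s).comp (tendsto_add_atTop_nat 1)
    exact tendsto_nhds_unique h3 h2
end

section
/- There exists a stationary Markov policy achieving the infinite-horizon optimal reachability values: there is a map π̄ : Q → S → A such that, denoting by π the time-varying policy with π k = π̄ for all k, for every q ∈ Q and s ∈ S the sequence k ↦ V^π k q s converges and its limit equals V∞ q s, the pointwise limit of the optimal value iteration V* k q s. -/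
open Finset Filter Topology

def Dset {S A Q : Type*} [Fintype S] (T : S → A → S → ℝ) (q_f : Q) (τ : Q → S → Q)
    (Vinf : Q → S → ℝ) : ℕ → Q → S → Prop
  | 0 => fun q _ => q = q_f
  | (n+1) => fun q s => Dset T q_f τ Vinf n q s ∨
      (q ≠ q_f ∧ ∃ a, (∑ s', T s a s' * Vinf (τ q s') s' = Vinf q s) ∧
        ∃ s', 0 < T s a s' ∧ Dset T q_f τ Vinf n (τ q s') s')

lemma Dset_mono {S A Q : Type*} [Fintype S] (T : S → A → S → ℝ) (q_f : Q) (τ : Q → S → Q)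
    (Vinf : Q → S → ℝ) {m n : ℕ} (h : m ≤ n) {q s} :
    Dset T q_f τ Vinf m q s → Dset T q_f τ Vinf n q s := by
  induction n with
  | zero => rw [Nat.le_zero.mp h]; exact id
  | succ n ih =>
    rcases Nat.lt_or_ge m (n+1) with h' | h'
    · intro hd; exact Or.inl (ih (Nat.lt_succ_iff.mp h') hd)
    · have : m = n + 1 := le_antisymm h h'
      rw [this]; exact id

lemma Dset_succ {S A Q : Type*} [Fintype S] (T : S → A → S → ℝ) (q_f : Q) (τ : Q → S → Q)
    (Vinf : Q → S → ℝ) {n : ℕ} {q : Q} {s : S} :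
    Dset T q_f τ Vinf (n+1) q s ↔ (Dset T q_f τ Vinf n q s ∨
      (q ≠ q_f ∧ ∃ a, (∑ s', T s a s' * Vinf (τ q s') s' = Vinf q s) ∧
        ∃ s', 0 < T s a s' ∧ Dset T q_f τ Vinf n (τ q s') s')) := Iff.rfl

lemma force_eq {ι : Type*} {s : Finset ι} {w f : ι → ℝ} {c : ℝ}
    (hw : ∀ i ∈ s, 0 ≤ w i) (hf : ∀ i ∈ s, 0 < w i → f i ≤ c)
    (h : ∑ i ∈ s, w i * f i = c * ∑ i ∈ s, w i) :
    ∀ i ∈ s, 0 < w i → f i = c := by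
  have h1 : ∑ i ∈ s, w i * (c - f i) = 0 := by
    have : ∑ i ∈ s, w i * (c - f i) = c * ∑ i ∈ s, w i - ∑ i ∈ s, w i * f i := by
      rw [Finset.mul_sum, ← Finset.sum_sub_distrib]
      exact Finset.sum_congr rfl fun i _ => by ring
    rw [this, h, sub_self]
  have hnn : ∀ i ∈ s, 0 ≤ w i * (c - f i) := by
    intro i hi
    rcases (hw i hi).lt_or_eq with h' | h'
    · exact mul_nonneg h'.le (sub_nonneg.mpr (hf i hi h'))
    · rw [← h', zero_mul]
  have h2 := (Finset.sum_eq_zero_iff_of_nonneg hnn).mp h1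
  intro i hi hwi
  have h3 := h2 i hi
  have : c - f i = 0 := by
    rcases mul_eq_zero.mp h3 with h' | h'
    · exact absurd h' (ne_of_gt hwi)
    · exact h'
  linarith

theorem stmt15 {S A Q : Type*} [Fintype S] [Fintype A] [Fintype Q]
    [Nonempty S] [Nonempty A] [Nonempty Q] [DecidableEq Q]
    (T : S → A → S → ℝ)
    (hT0 : ∀ s a s', 0 ≤ T s a s') (hT1 : ∀ s a, ∑ s', T s a s' = 1)
    (q_f : Q) (τ : Q → S → Q)
    -- `VP π` is the value function of the time-varying Markov policy `π`
    (VP : (ℕ → Q → S → A) → ℕ → Q → S → ℝ)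
    (hVP0 : ∀ π q s, VP π 0 q s = if q = q_f then 1 else 0)
    (hVPf : ∀ π k s, VP π (k + 1) q_f s = 1)
    (hVPstep : ∀ π k q, q ≠ q_f → ∀ s,
      VP π (k + 1) q s = ∑ s', T s (π k q s) s' * VP π k (τ q s') s')
    -- optimal value functions
    (Vopt : ℕ → Q → S → ℝ)
    (hVopt0 : ∀ q s, Vopt 0 q s = if q = q_f then 1 else 0)
    (hVoptf : ∀ k s, Vopt (k + 1) q_f s = 1)
    (hVoptstep : ∀ k q, q ≠ q_f → ∀ s,
      Vopt (k + 1) q s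
        = Finset.univ.sup' Finset.univ_nonempty
            (fun a : A => ∑ s', T s a s' * Vopt k (τ q s') s'))
    -- the pointwise limit of the optimal value iteration
    (Vinf : Q → S → ℝ)
    (hVinf : ∀ (q : Q) (s : S),
      Tendsto (fun k => Vopt k q s) atTop (𝓝 (Vinf q s))) :
    ∃ πbar : Q → S → A, ∀ (q : Q) (s : S),
      Tendsto (fun k => VP (fun _ => πbar) k q s) atTop (𝓝 (Vinf q s)) := by
  classical
  -- nonnegativity of Vopt
  have hVopt_nonneg : ∀ k q s, 0 ≤ Vopt k q s := by
    intro k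
    induction k with
    | zero => intro q s; rw [hVopt0]; split <;> norm_num
    | succ k ih =>
      intro q s
      by_cases hq : q = q_f
      · subst hq; rw [hVoptf]; norm_num
      · rw [hVoptstep k q hq s]
        refine le_trans ?_ (Finset.le_sup' _ (Finset.mem_univ (Classical.arbitrary A)))
        exact Finset.sum_nonneg fun s' _ => mul_nonneg (hT0 _ _ _) (ih _ _)
  -- monotonicity of Vopt in k
  have hVopt_mono : ∀ q s, Monotone fun k => Vopt k q s := by
    have step : ∀ k q s, Vopt k q s ≤ Vopt (k+1) q s := by
      intro k
      induction k with
      | zero =>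
        intro q s
        by_cases hq : q = q_f
        · subst hq; rw [hVopt0, hVoptf, if_pos rfl]
        · rw [hVopt0, if_neg hq]; exact hVopt_nonneg 1 q s
      | succ k ih =>
        intro q s
        by_cases hq : q = q_f
        · subst hq; rw [hVoptf, hVoptf]
        · rw [hVoptstep k q hq s, hVoptstep (k+1) q hq s]
          refine Finset.sup'_le _ _ fun a _ => ?_
          refine le_trans ?_ (Finset.le_sup' _ (Finset.mem_univ a))
          exact Finset.sum_le_sum fun s' _ =>
            mul_le_mul_of_nonneg_left (ih _ _) (hT0 _ _ _)
    intro q s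
    exact monotone_nat_of_le_succ fun k => step k q s
  -- Vopt k ≤ Vinf
  have hle_inf : ∀ k q s, Vopt k q s ≤ Vinf q s := fun k q s =>
    Monotone.ge_of_tendsto (hVopt_mono q s) (hVinf q s) k
  have hVinf_nonneg : ∀ q s, 0 ≤ Vinf q s := fun q s =>
    le_trans (hVopt_nonneg 0 q s) (hle_inf 0 q s)
  -- Vinf at the goal
  have hVinf_f : ∀ s, Vinf q_f s = 1 := by
    intro s
    have h1 : Tendsto (fun k => Vopt k q_f s) atTop (𝓝 1) := by
      refine Tendsto.congr' ?_ tendsto_const_nhds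
      filter_upwards [eventually_ge_atTop 1] with k hk
      match k, hk with
      | (k+1), _ => exact (hVoptf k s).symm
    exact tendsto_nhds_unique (hVinf q_f s) h1
  -- Bellman equation for Vinf
  have hBellman : ∀ q s, q ≠ q_f →
      Finset.univ.sup' Finset.univ_nonempty
        (fun a : A => ∑ s', T s a s' * Vinf (τ q s') s') = Vinf q s := by
    intro q s hq
    have h1 : Tendsto (fun k => Vopt (k+1) q s) atTop (𝓝 (Vinf q s)) :=
      (hVinf q s).comp (tendsto_add_atTop_nat 1)
    have h2 : Tendsto
        (fun k => Finset.univ.sup' Finset.univ_nonempty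
          (fun a : A => ∑ s', T s a s' * Vopt k (τ q s') s')) atTop
        (𝓝 (Finset.univ.sup' Finset.univ_nonempty
          (fun a : A => ∑ s', T s a s' * Vinf (τ q s') s'))) := by
      refine Filter.Tendsto.finset_sup'_nhds_apply _ fun a _ => ?_
      exact tendsto_finset_sum _ fun s' _ => (hVinf (τ q s') s').const_mul _
    have h3 : (fun k => Vopt (k+1) q s) =
        fun k => Finset.univ.sup' Finset.univ_nonempty
          (fun a : A => ∑ s', T s a s' * Vopt k (τ q s') s') := by
      funext k; exact hVoptstep k q hq s
    rw [h3] at h1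
    exact tendsto_nhds_unique h2 h1
  -- greedy actions exist
  have hgreedy_ex : ∀ q s, q ≠ q_f →
      ∃ a, ∑ s', T s a s' * Vinf (τ q s') s' = Vinf q s := by
    intro q s hq
    obtain ⟨a, _, ha⟩ := Finset.exists_mem_eq_sup' (Finset.univ_nonempty (α := A))
      (fun a : A => ∑ s', T s a s' * Vinf (τ q s') s')
    exact ⟨a, by rw [← ha, hBellman q s hq]⟩
  set D := Dset T q_f τ Vinf with hD
  -- crux: outside ⋃ D n, Vinf = 0
  have hcrux : ∀ q s, (¬ ∃ n, D n q s) → Vinf q s = 0 := by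
    intro q0 s0 hq0
    let Eset : Finset (Q × S) := Finset.univ.filter (fun x => ¬ ∃ n, D n x.1 x.2)
    have hmemE : ∀ x : Q × S, x ∈ Eset ↔ ¬ ∃ n, D n x.1 x.2 := by
      intro x; simp [Eset]
    have hE0 : (q0, s0) ∈ Eset := (hmemE _).mpr hq0
    have hEne : Eset.Nonempty := ⟨_, hE0⟩
    have hEnotf : ∀ x ∈ Eset, x.1 ≠ q_f := by
      intro x hx hf
      exact (hmemE x).mp hx ⟨0, by rw [hD]; exact hf⟩
    set c := Eset.sup' hEne (fun x => Vinf x.1 x.2) with hc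
    have hle_c : ∀ x ∈ Eset, Vinf x.1 x.2 ≤ c := fun x hx => by
      rw [hc]; exact Finset.le_sup' (fun x : Q × S => Vinf x.1 x.2) hx
    suffices hcle : c ≤ 0 by
      have := hle_c _ hE0
      exact le_antisymm (le_trans this hcle) (hVinf_nonneg _ _)
    by_contra hcpos
    push_neg at hcpos
    have hEclosed : ∀ q s, (q, s) ∈ Eset → ∀ a,
        (∑ s', T s a s' * Vinf (τ q s') s' = Vinf q s) →
        ∀ s', 0 < T s a s' → (τ q s', s') ∈ Eset := by
      intro q s hqs a hga s' hT
      rw [hmemE]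
      rintro ⟨n, hn⟩
      refine (hmemE _).mp hqs ⟨n+1, ?_⟩
      rw [hD]
      exact Or.inr ⟨hEnotf _ hqs, a, hga, s', hT, hn⟩
    let F : Finset (Q × S) := Eset.filter (fun x => Vinf x.1 x.2 = c)
    have hmemF : ∀ x, x ∈ F ↔ x ∈ Eset ∧ Vinf x.1 x.2 = c := by intro x; simp [F]
    obtain ⟨x0, hx0E, hx0⟩ := Finset.exists_mem_eq_sup' hEne (fun x => Vinf x.1 x.2)
    have hx0F : x0 ∈ F := (hmemF _).mpr ⟨hx0E, hx0.symm⟩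
    let g : (Q × S) × A → ℝ := fun p => ∑ s', T p.1.2 p.2 s' * Vinf (τ p.1.1 s') s'
    let Bad : Finset ((Q × S) × A) := Finset.univ.filter (fun p => p.1 ∈ F ∧ g p < c)
    let Eps : Finset ℝ := insert c (Bad.image (fun p => c - g p))
    have hEpsne : Eps.Nonempty := ⟨c, Finset.mem_insert_self _ _⟩
    set ε := Eps.min' hEpsne with hε
    have hεpos : 0 < ε := by
      rw [hε, Finset.lt_min'_iff]
      intro b hb
      rcases Finset.mem_insert.mp hb with rfl | hb
      · exact hcpos
      · obtain ⟨p, hp, rfl⟩ := Finset.mem_image.mp hb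
        have := (Finset.mem_filter.mp hp).2.2
        linarith
    have hεc : ε ≤ c := Finset.min'_le _ _ (Finset.mem_insert_self _ _)
    have hεbad : ∀ p ∈ Bad, ε ≤ c - g p := fun p hp =>
      Finset.min'_le _ _ (Finset.mem_insert_of_mem (Finset.mem_image_of_mem _ hp))
    set V' : Q → S → ℝ := fun q s => Vinf q s - if (q, s) ∈ F then ε else 0 with hV'
    have hV'le : ∀ q s, V' q s ≤ Vinf q s := by
      intro q s; rw [hV']; dsimp only; split
      · linarith
      · linarith
    have hV'f : ∀ s, V' q_f s = 1 := by
      intro s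
      have hnF : (q_f, s) ∉ F := fun h => hEnotf _ ((hmemF _).mp h).1 rfl
      rw [hV']; dsimp only; rw [if_neg hnF, hVinf_f, sub_zero]
    have hVle : ∀ k q s, Vopt k q s ≤ V' q s := by
      intro k
      induction k with
      | zero =>
        intro q s
        by_cases hq : q = q_f
        · subst hq; rw [hVopt0, if_pos rfl, hV'f]
        · rw [hVopt0, if_neg hq, hV']; dsimp only
          split
          · rename_i h
            have hVc : Vinf q s = c := ((hmemF _).mp h).2
            rw [hVc]; linarith
          · linarith [hVinf_nonneg q s]
      | succ k ih =>
        intro q s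
        by_cases hq : q = q_f
        · subst hq; rw [hVoptf, hV'f]
        · rw [hVoptstep k q hq s]
          refine Finset.sup'_le _ _ fun a _ => ?_
          have step1 : ∑ s', T s a s' * Vopt k (τ q s') s'
              ≤ ∑ s', T s a s' * V' (τ q s') s' :=
            Finset.sum_le_sum fun s' _ => mul_le_mul_of_nonneg_left (ih _ _) (hT0 _ _ _)
          refine le_trans step1 ?_
          have hga_le : ∑ s', T s a s' * Vinf (τ q s') s' ≤ Vinf q s := by
            have h1 := Finset.le_sup' (fun a : A => ∑ s', T s a s' * Vinf (τ q s') s')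
              (Finset.mem_univ a)
            rw [hBellman q s hq] at h1
            exact h1
          by_cases hF : (q, s) ∈ F
          · have hVc : Vinf q s = c := ((hmemF _).mp hF).2
            have hVqs : V' q s = c - ε := by
              rw [hV']; dsimp only; rw [if_pos hF, hVc]
            by_cases hlt : g ((q, s), a) < c
            · have hpBad : ((q, s), a) ∈ Bad :=
                Finset.mem_filter.mpr ⟨Finset.mem_univ _, hF, hlt⟩
              have h1 := hεbad _ hpBad
              have h2 : ∑ s', T s a s' * V' (τ q s') s' ≤ g ((q, s), a) :=
                Finset.sum_le_sum fun s' _ =>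
                  mul_le_mul_of_nonneg_left (hV'le _ _) (hT0 _ _ _)
              rw [hVqs]
              have hgdef : g ((q, s), a) = ∑ s', T s a s' * Vinf (τ q s') s' := rfl
              linarith
            · have hgc : g ((q, s), a) = c := le_antisymm (by
                have : g ((q, s), a) ≤ Vinf q s := hga_le
                rw [hVc] at this; exact this) (not_lt.mp hlt)
            -- greedy action: all positive-probability successors are in F
              have hgr : ∑ s', T s a s' * Vinf (τ q s') s' = Vinf q s := by
                rw [hVc]; exact hgc
              have hsuccE : ∀ s', 0 < T s a s' → (τ q s', s') ∈ Eset :=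
                hEclosed q s ((hmemF _).mp hF).1 a hgr
              have hsuccF : ∀ s' ∈ (Finset.univ : Finset S), 0 < T s a s' →
                  Vinf (τ q s') s' = c := by
                refine force_eq (fun s' _ => hT0 s a s') ?_ ?_
                · intro s' _ hT'
                  exact hle_c _ (hsuccE s' hT')
                · rw [hT1, mul_one, hgr, hVc]
              have heq : ∑ s', T s a s' * V' (τ q s') s'
                  = ∑ s', (T s a s' * Vinf (τ q s') s' - T s a s' * ε) := by
                refine Finset.sum_congr rfl fun s' _ => ?_
                rcases (hT0 s a s').lt_or_eq with hT' | hT'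
                · have hsF : (τ q s', s') ∈ F :=
                    (hmemF _).mpr ⟨hsuccE s' hT', hsuccF s' (Finset.mem_univ s') hT'⟩
                  rw [hV']; dsimp only; rw [if_pos hsF]; ring
                · rw [← hT']; ring
              rw [heq, Finset.sum_sub_distrib, ← Finset.sum_mul, hT1, one_mul, hgr, hVc,
                hVqs]
          · have h2 : ∑ s', T s a s' * V' (τ q s') s'
                ≤ ∑ s', T s a s' * Vinf (τ q s') s' :=
              Finset.sum_le_sum fun s' _ =>
                mul_le_mul_of_nonneg_left (hV'le _ _) (hT0 _ _ _)
            have hVqs : V' q s = Vinf q s := by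
              rw [hV']; dsimp only; rw [if_neg hF, sub_zero]
            rw [hVqs]
            exact le_trans h2 hga_le
    have hlim : Vinf x0.1 x0.2 ≤ V' x0.1 x0.2 :=
      le_of_tendsto' (hVinf x0.1 x0.2) fun k => hVle k x0.1 x0.2
    have : V' x0.1 x0.2 = c - ε := by
      rw [hV']; dsimp only
      rw [if_pos (by simpa using hx0F), ← hx0]
    rw [this, ← hx0] at hlim
    linarith
  -- selection of a greedy, rank-decreasing action
  have hsel : ∀ q s, q ≠ q_f → ∃ a,
      (∑ s', T s a s' * Vinf (τ q s') s' = Vinf q s) ∧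
      ((∃ n, D n q s) → ∃ s' n, 0 < T s a s' ∧ D n (τ q s') s' ∧ ¬ D n q s) := by
    intro q s hq
    by_cases h : ∃ n, D n q s
    · have hspec : D (Nat.find h) q s := Nat.find_spec h
      have hn0 : Nat.find h ≠ 0 := by
        intro h0
        rw [h0, hD] at hspec
        exact hq hspec
      obtain ⟨m, hm⟩ := Nat.exists_eq_succ_of_ne_zero hn0
      have hnot : ¬ D m q s := Nat.find_min h (by omega)
      rw [hm, hD] at hspec
      rcases (Dset_succ T q_f τ Vinf).mp hspec with h1 | ⟨_, a, hga, s', hT', hDm⟩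
      · rw [← hD] at h1; exact absurd h1 hnot
      · refine ⟨a, hga, fun _ => ⟨s', m, hT', ?_, hnot⟩⟩
        rw [hD]; exact hDm
    · obtain ⟨a, ha⟩ := hgreedy_ex q s hq
      exact ⟨a, ha, fun hn => absurd hn h⟩
  choose πb hgr hrank using hsel
  set πbar : Q → S → A := fun q s =>
    if h : q = q_f then Classical.arbitrary A else πb q s h with hπbar
  have hπval : ∀ q s (h : q ≠ q_f), πbar q s = πb q s h := by
    intro q s h; rw [hπbar]; exact dif_neg h
  -- value of the stationary policy
  have hVP_nonneg : ∀ k q s, 0 ≤ VP (fun _ => πbar) k q s := by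
    intro k
    induction k with
    | zero => intro q s; rw [hVP0]; split <;> norm_num
    | succ k ih =>
      intro q s
      by_cases hq : q = q_f
      · subst hq; rw [hVPf]; norm_num
      · rw [hVPstep _ k q hq s]
        exact Finset.sum_nonneg fun s' _ => mul_nonneg (hT0 _ _ _) (ih _ _)
  have hVP_mono : ∀ k q s, VP (fun _ => πbar) k q s ≤ VP (fun _ => πbar) (k+1) q s := by
    intro k
    induction k with
    | zero =>
      intro q s
      by_cases hq : q = q_f
      · subst hq; rw [hVP0, hVPf, if_pos rfl]
      · rw [hVP0, if_neg hq]; exact hVP_nonneg 1 q s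
    | succ k ih =>
      intro q s
      by_cases hq : q = q_f
      · subst hq; rw [hVPf, hVPf]
      · rw [hVPstep _ k q hq s, hVPstep _ (k+1) q hq s]
        exact Finset.sum_le_sum fun s' _ =>
          mul_le_mul_of_nonneg_left (ih _ _) (hT0 _ _ _)
  have hVP_le : ∀ k q s, VP (fun _ => πbar) k q s ≤ Vopt k q s := by
    intro k
    induction k with
    | zero => intro q s; rw [hVP0, hVopt0]
    | succ k ih =>
      intro q s
      by_cases hq : q = q_f
      · subst hq; rw [hVPf, hVoptf]
      · rw [hVPstep _ k q hq s, hVoptstep k q hq s]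
        refine le_trans ?_ (Finset.le_sup' _ (Finset.mem_univ (πbar q s)))
        exact Finset.sum_le_sum fun s' _ =>
          mul_le_mul_of_nonneg_left (ih _ _) (hT0 _ _ _)
  have hVP_le_inf : ∀ k q s, VP (fun _ => πbar) k q s ≤ Vinf q s := fun k q s =>
    le_trans (hVP_le k q s) (hle_inf k q s)
  set W : Q → S → ℝ := fun q s => ⨆ k, VP (fun _ => πbar) k q s with hWdef
  have hW : ∀ q s, Tendsto (fun k => VP (fun _ => πbar) k q s) atTop (𝓝 (W q s)) := by
    intro q s
    rw [hWdef]
    exact tendsto_atTop_ciSup (monotone_nat_of_le_succ fun k => hVP_mono k q s)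
      ⟨Vinf q s, by rintro x ⟨k, rfl⟩; exact hVP_le_inf k q s⟩
  have hWle : ∀ q s, W q s ≤ Vinf q s := fun q s =>
    le_of_tendsto' (hW q s) fun k => hVP_le_inf k q s
  have hW_nonneg : ∀ q s, 0 ≤ W q s := fun q s =>
    ge_of_tendsto' (hW q s) fun k => hVP_nonneg k q s
  have hWf : ∀ s, W q_f s = 1 := by
    intro s
    refine tendsto_nhds_unique (hW q_f s) ?_
    refine Tendsto.congr' ?_ tendsto_const_nhds
    filter_upwards [eventually_ge_atTop 1] with k hk
    match k, hk with
    | (k+1), _ => exact (hVPf _ k s).symm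
  have hWstep : ∀ q s, q ≠ q_f →
      W q s = ∑ s', T s (πbar q s) s' * W (τ q s') s' := by
    intro q s hq
    have h1 : Tendsto (fun k => VP (fun _ => πbar) (k+1) q s) atTop (𝓝 (W q s)) :=
      (hW q s).comp (tendsto_add_atTop_nat 1)
    have h2 : Tendsto (fun k => ∑ s', T s (πbar q s) s' * VP (fun _ => πbar) k (τ q s') s')
        atTop (𝓝 (∑ s', T s (πbar q s) s' * W (τ q s') s')) :=
      tendsto_finset_sum _ fun s' _ => (hW (τ q s') s').const_mul _
    have h3 : (fun k => VP (fun _ => πbar) (k+1) q s)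
        = fun k => ∑ s', T s (πbar q s) s' * VP (fun _ => πbar) k (τ q s') s' := by
      funext k; exact hVPstep _ k q hq s
    rw [h3] at h1
    exact tendsto_nhds_unique h1 h2
  -- the difference d and its maximum
  have hd_nonneg : ∀ x : Q × S, 0 ≤ Vinf x.1 x.2 - W x.1 x.2 := fun x =>
    sub_nonneg.mpr (hWle x.1 x.2)
  set d : Q × S → ℝ := fun x => Vinf x.1 x.2 - W x.1 x.2 with hd_def
  set mx := (Finset.univ : Finset (Q × S)).sup' Finset.univ_nonempty d with hmx
  have hdm : ∀ x, d x ≤ mx := by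
    intro x; rw [hmx]; exact Finset.le_sup' d (Finset.mem_univ x)
  have hmx_le : mx ≤ 0 := by
    by_contra hm0
    push_neg at hm0
    have hM : ∀ n q s, D n q s → d (q, s) < mx := by
      intro n
      induction n using Nat.strong_induction_on with
      | _ n ih =>
        intro q s hDn
        by_contra hd'
        have hdeq : d (q, s) = mx := le_antisymm (hdm _) (not_lt.mp hd')
        have hq : q ≠ q_f := by
          intro h
          have h0 : d (q, s) = 0 := by
            rw [hd_def]; dsimp only; rw [h, hVinf_f, hWf, sub_self]
          rw [h0] at hdeq; linarith
        obtain ⟨s', n', hT', hDn', hnotD⟩ := hrank q s hq ⟨n, hDn⟩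
        rw [← hπval q s hq] at hT'
        have hn'n : n' < n := by
          by_contra hge
          push_neg at hge
          refine hnotD ?_
          rw [hD] at hDn ⊢
          exact Dset_mono T q_f τ Vinf hge hDn
        have hsum : ∑ s'', T s (πbar q s) s'' * d (τ q s'', s'')
            = mx * ∑ s'', T s (πbar q s) s'' := by
          rw [hT1, mul_one]
          have e1 : Vinf q s = ∑ s'', T s (πbar q s) s'' * Vinf (τ q s'') s'' := by
            rw [hπval q s hq]; exact (hgr q s hq).symm
          have e2 : W q s = ∑ s'', T s (πbar q s) s'' * W (τ q s'') s'' := hWstep q s hq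
          have e3 : ∑ s'', T s (πbar q s) s'' * d (τ q s'', s'')
              = ∑ s'', (T s (πbar q s) s'' * Vinf (τ q s'') s''
                  - T s (πbar q s) s'' * W (τ q s'') s'') := by
            refine Finset.sum_congr rfl fun s'' _ => ?_
            rw [hd_def]; dsimp only; ring
          rw [e3, Finset.sum_sub_distrib, ← e1, ← e2, ← hdeq, hd_def]
        have hforce := force_eq (fun s'' _ => hT0 s (πbar q s) s'')
          (fun s'' _ _ => hdm (τ q s'', s'')) hsum
        have hds' : d (τ q s', s') = mx := hforce s' (Finset.mem_univ s') hT'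
        have := ih n' hn'n (τ q s') s' hDn'
        linarith
    obtain ⟨x1, _, hx1⟩ := Finset.exists_mem_eq_sup' (Finset.univ_nonempty) d
    obtain ⟨q1, s1⟩ := x1
    have hdx1 : d (q1, s1) = mx := by rw [hmx, hx1]
    have hVpos : 0 < Vinf q1 s1 := by
      have h1 := hW_nonneg q1 s1
      have h2 : Vinf q1 s1 - W q1 s1 = mx := hdx1
      linarith
    have hDx : ∃ n, D n q1 s1 := by
      by_contra h
      have := hcrux _ _ h
      rw [this] at hVpos
      exact lt_irrefl 0 hVpos
    obtain ⟨n, hn⟩ := hDx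
    have := hM n q1 s1 hn
    rw [hdx1] at this
    exact lt_irrefl mx this
  have hWeq : ∀ q s, W q s = Vinf q s := by
    intro q s
    have h1 : d (q, s) ≤ 0 := le_trans (hdm _) hmx_le
    have h2 := hd_nonneg (q, s)
    have h3 : d (q, s) = Vinf q s - W q s := rfl
    rw [h3] at h1
    dsimp only at h2
    linarith
  exact ⟨πbar, fun q s => by rw [← hWeq q s]; exact hW q s⟩
end
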